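/- On an n-dimensional real inner product space, for every (p,p)-double form ψ and every 1 ≤ q ≤ n - p, the full contraction satisfies C^(p+q)(ψ ⊘ g^q) = (∏_{j=1}^q (p+j)(n-p+1-j)) * C^p(ψ) = (q!)^2 * binom(p+q, q) * binom(n-p, q) * C^p(ψ). -/

import Mathlib

open Finset

namespace GaussBonnet

/-- Components, with respect to a fixed orthonormal basis indexed by `Fin n`, of a
`(k,l)`-double form on an `n`-dimensional real inner product space: an element of
`Λ^k V* ⊗ Λ^l V*` is determined by its components. -/
def DF (n k l : ℕ) : Type := (Fin k → Fin n) → (Fin l → Fin n) → ℝ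

variable {n : ℕ}

/-- The double wedge product of double forms, given by the standard
antisymmetrization formula. -/
noncomputable def dmul {k l p q : ℕ} (ψ₁ : DF n k l) (ψ₂ : DF n p q) : DF n (k + p) (l + q) :=
  fun X Y =>
    (1 / ((Nat.factorial k * Nat.factorial l * Nat.factorial p * Nat.factorial q : ℕ) : ℝ)) *
      ∑ σ : Equiv.Perm (Fin (k + p)), ∑ τ : Equiv.Perm (Fin (l + q)),
        ((Equiv.Perm.sign σ : ℤ) : ℝ) * ((Equiv.Perm.sign τ : ℤ) : ℝ) *
          ψ₁ (fun i => X (σ (Fin.castAdd p i))) (fun j => Y (τ (Fin.castAdd q j))) *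
          ψ₂ (fun i => X (σ (Fin.natAdd k i))) (fun j => Y (τ (Fin.natAdd l j)))

/-- The full contraction `C^p` of a `(p,p)`-double form, obtained by iterating `p`
times the contraction operator `C(ψ)(X's; Y's) = Σᵢ ψ(X's, eᵢ; Y's, eᵢ)` over an
orthonormal basis; it equals the sum of the diagonal components. -/
noncomputable def fullContr {p : ℕ} (ψ : DF n p p) : ℝ := ∑ f : Fin p → Fin n, ψ f f

/-- The metric tensor `g`, viewed as a `(1,1)`-double form (components `δᵢⱼ` in an
orthonormal basis). -/
noncomputable def gDF (n : ℕ) : DF n 1 1 := fun X Y => if X 0 = Y 0 then 1 else 0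

/-- Powers of a `(k,k)`-double form with respect to the double wedge product. -/
noncomputable def dpow {k : ℕ} (ψ : DF n k k) : ∀ q : ℕ, DF n (k * q) (k * q)
  | 0 => fun _ _ => 1
  | q + 1 => dmul (dpow ψ q) ψ

/-- A double form is alternating in each of its two groups of arguments. -/
def IsAlt {k l : ℕ} (ψ : DF n k l) : Prop :=
  ∀ (σ : Equiv.Perm (Fin k)) (τ : Equiv.Perm (Fin l)) (X : Fin k → Fin n) (Y : Fin l → Fin n),
    ψ (X ∘ σ) (Y ∘ τ) = ((Equiv.Perm.sign σ : ℤ) : ℝ) * ((Equiv.Perm.sign τ : ℤ) : ℝ) * ψ X Y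

end GaussBonnet

open GaussBonnet Finset

/-!
For a function `Φ` of two index tuples let `A(Φ) = ∑_f ∑_ρ sgn ρ · Φ(f, f ∘ ρ)` (`altContr`).
Unfolding `⊘` and reindexing, `C^(p+q)(ψ ⊘ ω) = (p+q)! / (p!² q!²) · A(ψ ⊗ ω)`. Since `g^q = q! δ`
with `δ` the generalized Kronecker delta, and the permutations inside `δ` can be absorbed into `ρ`,
this is `(p+q)! / p!² · A(ψ ⊗ δ_{f(p+1) f(ρ(p+1))} ⋯ δ_{f(p+q) f(ρ(p+q))})`. Contracting one more
index slot multiplies `A` by `n - N`, `N` the number of remaining slots: permutations fixing the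
slot leave its index free (a factor `n`), each of the `N` others forces the index and costs a
transposition (a factor `-1`). Finally `A(ψ) = p! C^p(ψ)` for alternating `ψ`.
-/

open Equiv
open scoped Nat

namespace GaussBonnet

local notation "ε " σ:arg => ((Perm.sign σ : ℤ) : ℝ)

section Alternation

variable {ι κ : Type*} [Fintype ι] [DecidableEq ι] [Fintype κ] [DecidableEq κ] {n : ℕ}

lemma cast_sign_mul_self (σ : Perm ι) : ε σ * ε σ = 1 := by
  rw [← Int.cast_mul, ← Units.val_mul, Int.units_mul_self, Units.val_one, Int.cast_one]

lemma sum_sign_mul_mul_right (H : Perm ι → ℝ) (θ : Perm ι) :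
    ∑ τ, ε τ * H (τ * θ) = ε θ * ∑ τ, ε τ * H τ := by
  rw [mul_sum]
  refine Fintype.sum_equiv (Equiv.mulRight θ) _ _ fun τ => ?_
  simp only [coe_mulRight, Perm.sign_mul, Units.val_mul, Int.cast_mul]
  linear_combination (-(ε τ) * H (τ * θ)) * cast_sign_mul_self θ

lemma sum_sign_mul_mul_left (H : Perm ι → ℝ) (θ : Perm ι) :
    ∑ τ, ε τ * H (θ * τ) = ε θ * ∑ τ, ε τ * H τ := by
  rw [mul_sum]
  refine Fintype.sum_equiv (Equiv.mulLeft θ) _ _ fun τ => ?_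
  simp only [coe_mulLeft, Perm.sign_mul, Units.val_mul, Int.cast_mul]
  linear_combination (-(ε τ) * H (θ * τ)) * cast_sign_mul_self θ

noncomputable def altContr (Φ : (ι → Fin n) → (ι → Fin n) → ℝ) : ℝ :=
  ∑ f : ι → Fin n, ∑ ρ : Perm ι, ε ρ * Φ f (f ∘ ρ)

lemma altContr_const_mul (c : ℝ) (Φ : (ι → Fin n) → (ι → Fin n) → ℝ) :
    altContr (fun F G => c * Φ F G) = c * altContr Φ := by
  simp only [altContr, mul_sum]
  exact sum_congr rfl fun f _ => sum_congr rfl fun ρ _ => mul_left_comm _ _ _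

lemma altContr_sum_mul {α : Type*} [Fintype α] (c : α → ℝ)
    (Ψ : α → (ι → Fin n) → (ι → Fin n) → ℝ) :
    altContr (fun F G => ∑ a, c a * Ψ a F G) = ∑ a, c a * altContr (Ψ a) := by
  simp only [altContr, mul_sum]
  conv_rhs => rw [sum_comm]
  refine sum_congr rfl fun f _ => ?_
  rw [sum_comm]
  exact sum_congr rfl fun a _ => sum_congr rfl fun ρ _ => by ring

lemma altContr_comp_right (Φ : (ι → Fin n) → (ι → Fin n) → ℝ) (θ : Perm ι) :
    altContr (fun F G => Φ F (G ∘ θ)) = ε θ * altContr Φ := by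
  rw [altContr, altContr, mul_sum]
  exact sum_congr rfl fun f _ => sum_sign_mul_mul_right (fun ρ => Φ f (f ∘ ρ)) θ

lemma sum_sum_sign_mul_comp (Φ : (ι → Fin n) → (ι → Fin n) → ℝ) (θ : Perm ι) :
    ∑ f : ι → Fin n, ∑ τ : Perm ι, ε τ * Φ (f ∘ θ) (f ∘ τ) = ε θ * altContr Φ := by
  rw [altContr, mul_sum]
  refine Fintype.sum_equiv (θ.symm.arrowCongr (Equiv.refl _)) _ _ fun f => ?_
  rw [← Perm.sign_inv, ← sum_sign_mul_mul_left _ θ⁻¹]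
  refine sum_congr rfl fun τ _ => ?_
  congr 2
  ext x
  simp

lemma sum_sum_sum_sign_mul_sign (Φ : (ι → Fin n) → (ι → Fin n) → ℝ) :
    ∑ f : ι → Fin n, ∑ σ : Perm ι, ∑ τ : Perm ι, ε σ * (ε τ * Φ (f ∘ σ) (f ∘ τ)) =
      (Fintype.card ι)! * altContr Φ := by
  have h : ∀ σ : Perm ι, ∑ f : ι → Fin n, ∑ τ, ε σ * (ε τ * Φ (f ∘ σ) (f ∘ τ)) =
      altContr Φ := fun σ => by
    simp only [← mul_sum]
    rw [sum_sum_sign_mul_comp, ← mul_assoc, cast_sign_mul_self, one_mul]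
  rw [sum_comm]
  simp only [h, sum_const, card_univ, Fintype.card_perm, nsmul_eq_mul]

lemma altContr_congr (e : ι ≃ κ) (Φ : (κ → Fin n) → (κ → Fin n) → ℝ) :
    altContr (fun F G => Φ (F ∘ e.symm) (G ∘ e.symm)) = altContr Φ := by
  refine Fintype.sum_equiv (e.arrowCongr (Equiv.refl _)) _ _ fun f => ?_
  refine Fintype.sum_equiv e.permCongr _ _ fun ρ => ?_
  simp only [Perm.sign_permCongr]
  congr 2
  ext x
  simp

/- Write `ρ = swap none a * optionCongr e`. For `a = none` the value `F none` is free, giving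
`n`; for `a = some a₀` the indicator forces `F none = F (some a₀)`, after which `G ∘ some = f ∘ e`
again, and the transposition contributes the sign `-1`. -/
lemma altContr_option (Φ : (ι → Fin n) → (ι → Fin n) → ℝ) :
    altContr (fun F G : Option ι → Fin n =>
        Φ (F ∘ some) (G ∘ some) * if F none = G none then 1 else 0) =
      (n - Fintype.card ι) * altContr Φ := by
  rw [altContr, ← piOptionEquivProd.symm.sum_comp, Fintype.sum_prod_type, sum_comm, altContr,
    mul_sum]
  refine sum_congr rfl fun f _ => ?_
  simp only [← Perm.decomposeOption.symm.sum_comp, Fintype.sum_prod_type, Fintype.sum_option]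
  simp only [Perm.decomposeOption_symm_apply, swap_self, Perm.sign_mul, Perm.sign_refl,
    optionCongr_sign, one_mul, Perm.coe_mul, coe_refl, CompTriple.comp_eq,
    piOptionEquivProd_symm_apply, Function.comp_apply, optionCongr_apply, Option.map_none,
    ↓reduceIte, mul_one, Perm.sign_swap', reduceCtorEq, neg_mul, Units.val_neg, Int.cast_neg,
    swap_apply_left, mul_ite, mul_zero, sum_ite_irrel, sum_neg_distrib, sum_const_zero]
  have h_some : ∀ v, piOptionEquivProd.symm (v, f) ∘ some = f := fun _ => rfl
  have h_none : ∀ v (e : Perm ι),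
      (piOptionEquivProd.symm (v, f) ∘ optionCongr e) ∘ some = f ∘ e := fun _ _ => rfl
  have h_swap : ∀ a (e : Perm ι),
      (piOptionEquivProd.symm (f a, f) ∘ swap none (some a) ∘ optionCongr e) ∘ some = f ∘ e := by
    intro a e
    ext x
    by_cases h : e x = a <;> simp [swap_apply_of_ne_of_ne, h]
  simp only [sum_add_distrib, sum_comm (γ := Fin n), h_none, h_some, Fintype.sum_ite_eq', h_swap,
    sum_const, card_univ, Fintype.card_fin, nsmul_eq_mul]
  rw [← mul_sum]
  ring

end Alternation

variable {n : ℕ}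

lemma altContr_of_isAlt {N : ℕ} {ψ : DF n N N} (hψ : IsAlt ψ) :
    altContr (ι := Fin N) ψ = N ! * fullContr ψ := by
  unfold altContr fullContr
  rw [mul_sum]
  refine sum_congr rfl fun f _ => ?_
  have h : ∀ ρ : Perm (Fin N), ψ f (f ∘ ρ) = ε ρ * ψ f f := fun ρ => by
    simpa using hψ 1 ρ f f
  simp only [h, ← mul_assoc, cast_sign_mul_self, one_mul, sum_const, card_univ,
    Fintype.card_perm, Fintype.card_fin, nsmul_eq_mul]

lemma altContr_mul_ite_comp_natAdd {N : ℕ} (Φ : (Fin N → Fin n) → (Fin N → Fin n) → ℝ) (m : ℕ) :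
    altContr (fun F G : Fin (N + m) → Fin n => Φ (F ∘ Fin.castAdd m) (G ∘ Fin.castAdd m) *
        if F ∘ Fin.natAdd N = G ∘ Fin.natAdd N then 1 else 0) =
      (∏ j ∈ range m, ((n : ℝ) - (N + j))) * altContr Φ := by
  induction m with
  | zero => simp [funext_iff]
  | succ m ih =>
    set Φ' : (Fin (N + m) → Fin n) → (Fin (N + m) → Fin n) → ℝ := fun F G =>
      Φ (F ∘ Fin.castAdd m) (G ∘ Fin.castAdd m) *
        if F ∘ Fin.natAdd N = G ∘ Fin.natAdd N then 1 else 0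
    calc _ = altContr (fun F G : Option (Fin (N + m)) → Fin n =>
            Φ' (F ∘ some) (G ∘ some) * if F none = G none then 1 else 0) := by
          rw [← altContr_congr (finSuccEquivLast (n := N + m)).symm]
          congr 1
          ext F G
          simp only [Φ', Equiv.symm_symm, mul_assoc, ite_zero_mul_ite_zero, one_mul]
          congr 2
          · funext j; exact congrArg F (finSuccEquivLast_castSucc (Fin.castAdd m j))
          · funext j; exact congrArg G (finSuccEquivLast_castSucc (Fin.castAdd m j))
          · simp only [funext_iff, Fin.forall_fin_succ', Function.comp_apply, Fin.natAdd_castSucc,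
              Fin.natAdd_last, finSuccEquivLast_castSucc, finSuccEquivLast_last]
      _ = ((n : ℝ) - (N + m)) * altContr Φ' := by
          rw [altContr_option, Fintype.card_fin, Nat.cast_add]
      _ = _ := by rw [ih, prod_range_succ]; ring

lemma fullContr_dmul {k l : ℕ} (ψ₁ : DF n k k) (ψ₂ : DF n l l) :
    fullContr (dmul ψ₁ ψ₂) = 1 / ((k ! * k ! * l ! * l ! : ℕ) : ℝ) * ((k + l)! *
      altContr (fun F G : Fin (k + l) → Fin n =>
        ψ₁ (F ∘ Fin.castAdd l) (G ∘ Fin.castAdd l) * ψ₂ (F ∘ Fin.natAdd k) (G ∘ Fin.natAdd k))) := by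
  have h := sum_sum_sum_sign_mul_sign (fun F G : Fin (k + l) → Fin n =>
    ψ₁ (F ∘ Fin.castAdd l) (G ∘ Fin.castAdd l) * ψ₂ (F ∘ Fin.natAdd k) (G ∘ Fin.natAdd k))
  rw [Fintype.card_fin] at h
  rw [← h]
  simp only [fullContr, dmul, mul_sum, mul_assoc]
  rfl

def blockPerm {k l : ℕ} (π₁ : Perm (Fin k)) (π₂ : Perm (Fin l)) : Perm (Fin (k + l)) :=
  finSumFinEquiv.permCongr (π₁.sumCongr π₂)

section BlockPerm

variable {k l : ℕ} (π₁ : Perm (Fin k)) (π₂ : Perm (Fin l))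

@[simp] lemma blockPerm_castAdd (i : Fin k) :
    blockPerm π₁ π₂ (Fin.castAdd l i) = Fin.castAdd l (π₁ i) := by
  simp [blockPerm, permCongr_apply]

@[simp] lemma blockPerm_natAdd (j : Fin l) :
    blockPerm π₁ π₂ (Fin.natAdd k j) = Fin.natAdd k (π₂ j) := by
  simp [blockPerm, permCongr_apply]

lemma sign_blockPerm : ε (blockPerm π₁ π₂) = ε π₁ * ε π₂ := by
  simp [blockPerm, Perm.sign_permCongr, Perm.sign_sumCongr]

lemma eq_comp_blockPerm_iff {α : Type*} (X Y : Fin (k + l) → α) :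
    X = Y ∘ blockPerm π₁ π₂ ↔
      X ∘ Fin.castAdd l = (Y ∘ Fin.castAdd l) ∘ π₁ ∧
        X ∘ Fin.natAdd k = (Y ∘ Fin.natAdd k) ∘ π₂ := by
  simp only [funext_iff, Fin.forall_fin_add, Function.comp_apply, blockPerm_castAdd,
    blockPerm_natAdd]

end BlockPerm

noncomputable def kdelta {l : ℕ} (X Y : Fin l → Fin n) : ℝ :=
  ∑ π : Perm (Fin l), ε π * if X = Y ∘ π then 1 else 0

lemma gDF_eq_kdelta : gDF n = kdelta := by
  funext X Y
  simp [gDF, kdelta, funext_iff, Fin.forall_fin_one]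

lemma kdelta_comp_left {l : ℕ} (X Y : Fin l → Fin n) (σ : Perm (Fin l)) :
    kdelta (X ∘ σ) Y = ε σ * kdelta X Y := by
  have h : ∀ π : Perm (Fin l), (X ∘ σ = Y ∘ π) ↔ X = Y ∘ ⇑(π * σ⁻¹) := fun π => by
    rw [Perm.coe_mul, ← Function.comp_assoc, Perm.coe_inv, Equiv.eq_comp_symm]
  simp only [kdelta, h]
  rw [sum_sign_mul_mul_right (fun π => if X = Y ∘ π then 1 else 0) σ⁻¹, Perm.sign_inv]

lemma kdelta_mul_kdelta {k l : ℕ} (X Y : Fin (k + l) → Fin n) :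
    kdelta (X ∘ Fin.castAdd l) (Y ∘ Fin.castAdd l) *
        kdelta (X ∘ Fin.natAdd k) (Y ∘ Fin.natAdd k) =
      ∑ π₁ : Perm (Fin k), ∑ π₂ : Perm (Fin l),
        ε (blockPerm π₁ π₂) * if X = Y ∘ blockPerm π₁ π₂ then 1 else 0 := by
  simp only [kdelta, sum_mul_sum, eq_comp_blockPerm_iff, sign_blockPerm]
  refine sum_congr rfl fun π₁ _ => sum_congr rfl fun π₂ _ => ?_
  rw [ite_and]
  split_ifs <;> ring

lemma sum_sign_mul_kdelta_mul_kdelta {k l : ℕ} (X Y : Fin (k + l) → Fin n) :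
    ∑ τ : Perm (Fin (k + l)), ε τ * (kdelta (X ∘ Fin.castAdd l) ((Y ∘ τ) ∘ Fin.castAdd l) *
        kdelta (X ∘ Fin.natAdd k) ((Y ∘ τ) ∘ Fin.natAdd k)) =
      k ! * l ! * kdelta X Y := by
  have h : ∀ θ : Perm (Fin (k + l)),
      ∑ τ : Perm (Fin (k + l)), ε τ * (ε θ * if X = (Y ∘ τ) ∘ θ then 1 else 0) =
        kdelta X Y := fun θ => calc
    _ = ε θ * ∑ τ : Perm (Fin (k + l)), ε τ * if X = Y ∘ ⇑(τ * θ) then 1 else 0 := by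
      rw [mul_sum]
      exact sum_congr rfl fun τ _ => mul_left_comm _ _ _
    _ = kdelta X Y := by
      rw [sum_sign_mul_mul_right (fun ρ => if X = Y ∘ ρ then 1 else 0), ← mul_assoc,
        cast_sign_mul_self, one_mul, kdelta]
  simp only [kdelta_mul_kdelta, mul_sum]
  rw [sum_comm]
  simp only [sum_comm (γ := Perm (Fin (k + l))), h, sum_const, card_univ, Fintype.card_perm,
    Fintype.card_fin, nsmul_eq_mul]
  ring

lemma dmul_kdelta {k l : ℕ} (X Y : Fin (k + l) → Fin n) :
    dmul (n := n) kdelta kdelta X Y = (k + l)! / (k ! * l !) * kdelta X Y := by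
  have h : ∀ σ : Perm (Fin (k + l)), ∑ τ : Perm (Fin (k + l)),
      ε τ * (kdelta ((X ∘ σ) ∘ Fin.castAdd l) ((Y ∘ τ) ∘ Fin.castAdd l) *
        kdelta ((X ∘ σ) ∘ Fin.natAdd k) ((Y ∘ τ) ∘ Fin.natAdd k)) =
      k ! * l ! * (ε σ * kdelta X Y) := fun σ => by
    rw [sum_sign_mul_kdelta_mul_kdelta, kdelta_comp_left]
  -- `dmul` presents its arguments as lambdas rather than compositions
  simp only [Function.comp_def] at h
  have h' : ∀ σ : Perm (Fin (k + l)), ε σ * (k ! * l ! * (ε σ * kdelta X Y)) =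
      k ! * l ! * kdelta X Y := fun σ => by
    linear_combination (k ! * l ! * kdelta X Y : ℝ) * cast_sign_mul_self σ
  simp only [dmul, mul_assoc, ← mul_sum]
  simp only [h, h', sum_const, card_univ, Fintype.card_perm, Fintype.card_fin, nsmul_eq_mul]
  field_simp
  push_cast
  ring

lemma dmul_const_mul {k l p q : ℕ} (a : ℝ) (ψ₁ : (Fin k → Fin n) → (Fin l → Fin n) → ℝ)
    (ψ₂ : DF n p q) (X : Fin (k + p) → Fin n) (Y : Fin (l + q) → Fin n) :
    dmul (fun X Y => a * ψ₁ X Y) ψ₂ X Y = a * dmul ψ₁ ψ₂ X Y := by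
  simp only [dmul, mul_sum]
  exact sum_congr rfl fun σ _ => sum_congr rfl fun τ _ => by ring

lemma dpow_gDF (q : ℕ) (X Y : Fin (1 * q) → Fin n) : dpow (gDF n) q X Y = q ! * kdelta X Y := by
  induction q with
  | zero => simp [dpow, kdelta, funext_iff]
  | succ q ih =>
    have h : dpow (gDF n) q = fun X Y => (q ! : ℝ) * kdelta X Y := funext fun X => funext (ih X)
    calc dpow (gDF n) (q + 1) X Y = q ! * dmul (n := n) kdelta kdelta X Y := by
          rw [dpow, h, gDF_eq_kdelta]
          exact dmul_const_mul _ _ _ _ _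
      _ = (q + 1)! * kdelta X Y := by
          -- the equation lemma of `dpow` unfolds `1 * q` to `Nat.mul 1 q`
          have hq : (q ! : ℝ) * ((Nat.mul 1 q + 1)! / ((Nat.mul 1 q)! * (1 !))) = (q + 1)! := by
            rw [show Nat.mul 1 q = q from Nat.one_mul q, Nat.factorial_one, Nat.cast_one, mul_one,
              mul_div_cancel₀ _ (by positivity)]
          rw [dmul_kdelta, ← mul_assoc, hq]

lemma altContr_mul_kdelta {k l : ℕ} (Φ : (Fin k → Fin n) → (Fin k → Fin n) → ℝ) :
    altContr (fun F G : Fin (k + l) → Fin n =>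
        Φ (F ∘ Fin.castAdd l) (G ∘ Fin.castAdd l) * kdelta (F ∘ Fin.natAdd k) (G ∘ Fin.natAdd k)) =
      l ! * altContr (fun F G : Fin (k + l) → Fin n =>
        Φ (F ∘ Fin.castAdd l) (G ∘ Fin.castAdd l) *
          if F ∘ Fin.natAdd k = G ∘ Fin.natAdd k then 1 else 0) := by
  set B : (Fin (k + l) → Fin n) → (Fin (k + l) → Fin n) → ℝ := fun F G =>
    Φ (F ∘ Fin.castAdd l) (G ∘ Fin.castAdd l) *
      if F ∘ Fin.natAdd k = G ∘ Fin.natAdd k then 1 else 0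
  have hB : ∀ (π : Perm (Fin l)) (F G : Fin (k + l) → Fin n),
      Φ (F ∘ Fin.castAdd l) (G ∘ Fin.castAdd l) *
          (ε π * if F ∘ Fin.natAdd k = (G ∘ Fin.natAdd k) ∘ π then 1 else 0) =
        ε π * B F (G ∘ blockPerm 1 π) := fun π F G => by
    have h₁ : (G ∘ blockPerm 1 π) ∘ Fin.castAdd l = G ∘ Fin.castAdd l := by
      funext i; simp
    have h₂ : (G ∘ blockPerm 1 π) ∘ Fin.natAdd k = (G ∘ Fin.natAdd k) ∘ π := by
      funext j; simp
    simp only [B, h₁, h₂]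
    ring
  simp only [kdelta, mul_sum, hB]
  rw [altContr_sum_mul]
  simp only [altContr_comp_right B, sign_blockPerm, Perm.sign_one, Units.val_one, Int.cast_one,
    one_mul, ← mul_assoc, cast_sign_mul_self, sum_const, card_univ, Fintype.card_perm,
    Fintype.card_fin, nsmul_eq_mul]

lemma fullContr_dmul_dpow_gDF {p : ℕ} {ψ : DF n p p} (hψ : IsAlt ψ) (q : ℕ) :
    fullContr (dmul ψ (dpow (gDF n) q)) =
      (p + 1).ascFactorial q * (∏ j ∈ range q, ((n : ℝ) - (p + j))) * fullContr ψ := by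
  rw [fullContr_dmul]
  simp only [dpow_gDF, mul_left_comm _ ((q ! : ℝ)) _]
  rw [altContr_const_mul, altContr_mul_kdelta (Φ := ψ), altContr_mul_ite_comp_natAdd (Φ := ψ),
    altContr_of_isAlt hψ]
  simp only [one_mul]
  rw [← Nat.factorial_mul_ascFactorial]
  push_cast
  field_simp

lemma prod_Icc_add_mul_sub (a m q : ℕ) :
    ∏ j ∈ Icc 1 q, (a + j) * (m + 1 - j) = (a + 1).ascFactorial q * m.descFactorial q := by
  rw [← Ico_add_one_right_eq_Icc, prod_Ico_eq_prod_range, Nat.add_sub_cancel, prod_mul_distrib,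
    Nat.ascFactorial_eq_prod_range, Nat.descFactorial_eq_prod_range]
  congr 1 <;> exact prod_congr rfl fun j _ => by omega

end GaussBonnet

theorem fullContr_dmul_g_pow_general (n p q : ℕ) (ψ : DF n p p) (hψ : IsAlt ψ)
    (h2 : q ≤ n - p) :
    fullContr (dmul ψ (dpow (gDF n) q)) =
        (∏ j ∈ Finset.Icc 1 q, (((p + j) * (n - p + 1 - j) : ℕ) : ℝ)) * fullContr ψ ∧
      fullContr (dmul ψ (dpow (gDF n) q)) =
        (Nat.factorial q : ℝ) ^ 2 * (Nat.choose (p + q) q : ℝ) * (Nat.choose (n - p) q : ℝ) *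
          fullContr ψ := by
  have hdesc : ∏ j ∈ range q, ((n : ℝ) - (p + j)) = (n - p).descFactorial q := by
    rw [Nat.descFactorial_eq_prod_range, Nat.cast_prod]
    refine prod_congr rfl fun j hj => ?_
    have : p + j ≤ n := by have := mem_range.mp hj; omega
    rw [Nat.sub_sub, Nat.cast_sub this, Nat.cast_add]
  have key : fullContr (dmul ψ (dpow (gDF n) q)) =
      ((p + 1).ascFactorial q * (n - p).descFactorial q : ℕ) * fullContr ψ := by
    rw [fullContr_dmul_dpow_gDF hψ, hdesc, Nat.cast_mul]
  refine ⟨?_, ?_⟩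
  · rw [key, ← Nat.cast_prod, prod_Icc_add_mul_sub]
  · rw [key, Nat.ascFactorial_eq_factorial_mul_choose, Nat.descFactorial_eq_factorial_mul_choose]
    push_cast
    ring

/-- On an `n`-dimensional real inner product space, for every alternating
`(p,p)`-double form `ψ` and every `1 ≤ q ≤ n - p`,
`C^(p+q)(ψ ⊘ g^q) = (∏_{j=1}^q (p+j)(n-p+1-j)) C^p(ψ)
                 = (q!)² binom(p+q,q) binom(n-p,q) C^p(ψ)`. -/
theorem fullContr_dmul_g_pow (n p q : ℕ) (ψ : DF n p p) (hψ : IsAlt ψ)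
    (h1 : 1 ≤ q) (h2 : q ≤ n - p) :
    fullContr (dmul ψ (dpow (gDF n) q)) =
        (∏ j ∈ Finset.Icc 1 q, (((p + j) * (n - p + 1 - j) : ℕ) : ℝ)) * fullContr ψ ∧
      fullContr (dmul ψ (dpow (gDF n) q)) =
        (Nat.factorial q : ℝ) ^ 2 * (Nat.choose (p + q) q : ℝ) * (Nat.choose (n - p) q : ℝ) *
          fullContr ψ :=
  fullContr_dmul_g_pow_general n p q ψ hψ h2
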